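/- Let 𝒮 ⊆ 𝒯 be a π-system (stable under pairwise intersections) with σ(𝒮) = 𝒯, and suppose that for every A ∈ 𝒮, E(Cov_n(1_A,1_A|I)) → 0 as n → ∞. Then for every f ∈ L²(μ), the sequence f∘T^n converges weakly in L²(μ) to E(f|I). -/

import Mathlib

open MeasureTheory Filter Topology

noncomputable section

/-- The σ-algebra of invariant measurable sets of `T`. -/
def invSigma {Ω : Type*} [MeasurableSpace Ω] (T : Ω → Ω) : MeasurableSpace Ω where
  MeasurableSet' A := MeasurableSet A ∧ T ⁻¹' A = A
  measurableSet_empty := ⟨MeasurableSet.empty, by simp⟩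
  measurableSet_compl := fun A hA => ⟨hA.1.compl, by rw [Set.preimage_compl, hA.2]⟩
  measurableSet_iUnion := fun f hf =>
    ⟨MeasurableSet.iUnion fun i => (hf i).1, by
      rw [Set.preimage_iUnion]
      exact Set.iUnion_congr fun i => (hf i).2⟩

/-- `E(Cov_n(f,g|I)) = ∫ conj(f)·(g∘T^n) dμ − ∫ conj(E(f|I))·E(g|I) dμ`. -/
def expCovInv {Ω : Type*} [MeasurableSpace Ω] (μ : Measure Ω) (T : Ω → Ω)
    (f g : Ω → ℂ) (n : ℕ) : ℂ :=
  (∫ x, (starRingEnd ℂ) (f x) * g (T^[n] x) ∂μ) -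
    ∫ x, (starRingEnd ℂ) ((μ[f | invSigma T]) x) * (μ[g | invSigma T]) x ∂μ

/-!
Let `U` be the Koopman isometry `h ↦ h ∘ T` of `L²(μ)` and `P` the conditional expectation on the
invariant σ-algebra, an orthogonal projection whose range is fixed by `U`. Then
`E(Cov_n(f,f|I)) = ⟪h, Uⁿ h⟫` for `h = f - P f`, and for an isometry `⟪h, Uⁿ h⟫ → 0` already
forces `Uⁿ h → 0` weakly: `⟪y, Uⁿ h⟫ → 0` holds for `y` in the orbit of `h` (as
`⟪Uᵏ h, Uⁿ h⟫ = ⟪h, Uⁿ⁻ᵏ h⟫`), hence on its closed span, and trivially on the orthogonal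
complement. So `Uⁿ f → P f` weakly for indicators of sets in `S`. The `f` with this property form
a closed subspace of `L²` containing the constants; Dynkin's π-λ theorem extends it to all
indicators, and density of simple functions to all of `L²`.
-/

open scoped InnerProductSpace ComplexConjugate NNReal ENNReal symmDiff

section InnerNull

variable {𝕜 E ι : Type*} [RCLike 𝕜] [NormedAddCommGroup E] [InnerProductSpace 𝕜 E]

def innerTendstoZeroSubmodule (v : ι → E) (l : Filter ι) : Submodule 𝕜 E where
  carrier := {y | Tendsto (fun i => ⟪y, v i⟫_𝕜) l (𝓝 0)}
  add_mem' ha hb := by simpa [inner_add_left] using ha.add hb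
  zero_mem' := by simp [tendsto_const_nhds]
  smul_mem' c y hy := by simpa [inner_smul_left] using hy.const_mul (conj c)

theorem lipschitzWith_inner_right (v : E) : LipschitzWith ‖v‖₊ (fun y : E => ⟪v, y⟫_𝕜) :=
  LipschitzWith.of_dist_le_mul fun y z => by
    simpa [dist_eq_norm, ← inner_sub_right] using norm_inner_le_norm (𝕜 := 𝕜) v (y - z)

theorem lipschitzWith_inner_left (v : E) : LipschitzWith ‖v‖₊ (fun y : E => ⟪y, v⟫_𝕜) :=
  LipschitzWith.of_dist_le_mul fun y z => by
    simpa [dist_eq_norm, ← inner_sub_left, mul_comm] using norm_inner_le_norm (𝕜 := 𝕜) (y - z) v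

theorem isClosed_innerTendstoZeroSubmodule {v : ι → E} {C : ℝ≥0} (hv : ∀ i, ‖v i‖₊ ≤ C)
    (l : Filter ι) : IsClosed (innerTendstoZeroSubmodule (𝕜 := 𝕜) v l : Set E) :=
  (LipschitzWith.uniformEquicontinuous _ C fun i => (lipschitzWith_inner_left (v i)).weaken (hv i)
    ).equicontinuous.isClosed_setOfPred_tendsto continuous_const

theorem tendsto_inner_pow_of_tendsto_inner_self_pow [CompleteSpace E] (U : E →ₗᵢ[𝕜] E) {x : E}
    (hx : Tendsto (fun n => ⟪x, (U ^ n) x⟫_𝕜) atTop (𝓝 0)) (y : E) :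
    Tendsto (fun n => ⟪y, (U ^ n) x⟫_𝕜) atTop (𝓝 0) := by
  set N := innerTendstoZeroSubmodule (𝕜 := 𝕜) (fun n => (U ^ n) x) atTop
  set W := Submodule.span 𝕜 (Set.range fun n => (U ^ n) x)
  have horbit : W ≤ N := by
    refine Submodule.span_le.2 (Set.range_subset_iff.2 fun k => ?_)
    refine (hx.comp (tendsto_sub_atTop_nat k)).congr' ?_
    filter_upwards [eventually_ge_atTop k] with n hn
    have hsplit : (U ^ n) x = (U ^ k) ((U ^ (n - k)) x) := by
      rw [← Function.comp_apply (f := ⇑(U ^ k)), ← LinearIsometry.coe_mul, ← pow_add,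
        Nat.add_sub_cancel' hn]
    rw [Function.comp_apply, hsplit, (U ^ k).inner_map_map]
  have hclosure : Wᗮᗮ ≤ N := by
    rw [Submodule.orthogonal_orthogonal_eq_closure]
    exact W.topologicalClosure_minimal horbit
      (isClosed_innerTendstoZeroSubmodule (C := ‖x‖₊) (fun n => by simp) atTop)
  have hperp : Wᗮ ≤ N := fun z hz =>
    tendsto_const_nhds.congr fun n =>
      (Submodule.inner_left_of_mem_orthogonal
        (Submodule.subset_span (Set.mem_range_self n)) hz).symm
  have hN : N = ⊤ := by
    rw [eq_top_iff, ← Wᗮ.sup_orthogonal_of_hasOrthogonalProjection]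
    exact sup_le hperp hclosure
  exact (hN ▸ Submodule.mem_top : y ∈ N)

end InnerNull

namespace MeasureTheory

variable {α E 𝕜 : Type*} {m : MeasurableSpace α} {μ : Measure α} {p : ℝ≥0∞}
  [NormedAddCommGroup E]

theorem smul_indicatorConstLp [NormedRing 𝕜] [Module 𝕜 E] [IsBoundedSMul 𝕜 E] [Fact (1 ≤ p)]
    {s : Set α} (hs : MeasurableSet s) (hμs : μ s ≠ ∞) (c : 𝕜) (x : E) :
    c • indicatorConstLp p hs hμs x = indicatorConstLp p hs hμs (c • x) := by
  ext1
  grw [Lp.coeFn_smul, indicatorConstLp_coeFn, indicatorConstLp_coeFn]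
  exact .of_eq (Set.indicator_const_smul _ _ _).symm

theorem indicatorConstLp_compl [IsFiniteMeasure μ] {s : Set α} (hs : MeasurableSet s) (c : E) :
    indicatorConstLp p hs.compl (measure_ne_top μ sᶜ) c =
      indicatorConstLp p .univ (measure_ne_top μ _) c -
        indicatorConstLp p hs (measure_ne_top μ s) c := by
  ext1
  grw [Lp.coeFn_sub, indicatorConstLp_coeFn, indicatorConstLp_coeFn, indicatorConstLp_coeFn]
  rw [Set.indicator_compl, Set.indicator_univ]

theorem _root_.MeasurableSet.accumulate {f : ℕ → Set α} (hf : ∀ i, MeasurableSet (f i)) (n : ℕ) :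
    MeasurableSet (Set.accumulate f n) :=
  .biUnion (Set.to_countable _) fun i _ => hf i

theorem tendsto_measure_symmDiff_accumulate_iUnion [IsFiniteMeasure μ] {f : ℕ → Set α}
    (hf : ∀ i, MeasurableSet (f i)) :
    Tendsto (fun n => μ (Set.accumulate f n ∆ ⋃ i, f i)) atTop (𝓝 0) := by
  have hacc := MeasurableSet.accumulate hf
  simp_rw [symmDiff_of_le (Set.accumulate_subset_iUnion _), measure_sdiff
    (Set.accumulate_subset_iUnion _) (hacc _).nullMeasurableSet (measure_ne_top μ _)]
  simpa using ENNReal.Tendsto.sub tendsto_const_nhds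
    (tendsto_measure_iUnion_accumulate (μ := μ) (f := f)) (Or.inl (measure_ne_top μ (⋃ i, f i)))

theorem Lp.addSubgroup_eq_top_of_isPiSystem [IsFiniteMeasure μ] [Fact (1 ≤ p)] (hp : p ≠ ∞)
    {V : AddSubgroup (Lp E p μ)} (hV : IsClosed (V : Set (Lp E p μ))) {S : Set (Set α)}
    (hgen : m = MeasurableSpace.generateFrom S) (hS : IsPiSystem S)
    (huniv : ∀ c, indicatorConstLp p .univ (measure_ne_top μ _) c ∈ V)
    (hmem : ∀ A ∈ S, ∀ (hA : MeasurableSet A) c, indicatorConstLp p hA (measure_ne_top μ A) c ∈ V) :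
    V = ⊤ := by
  have hind : ∀ s (hs : MeasurableSet s) (hμs : μ s ≠ ∞) c, indicatorConstLp p hs hμs c ∈ V := by
    refine MeasurableSpace.induction_on_inter
      (C := fun s hs => ∀ (hμs : μ s ≠ ∞) c, indicatorConstLp p hs hμs c ∈ V) hgen hS ?_ ?_ ?_ ?_
    · intro _ c
      simp
    · exact fun A hA _ => hmem A hA _
    · intro s hs h _ c
      rw [indicatorConstLp_compl hs]
      exact V.sub_mem (huniv c) (h _ c)
    · intro f hdisj hf h _ c
      have hacc := MeasurableSet.accumulate hf
      have hmem_acc : ∀ n, indicatorConstLp p (hacc n) (measure_ne_top μ _) c ∈ V := by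
        intro n
        induction n with
        | zero => simpa [Set.accumulate_zero_nat] using h 0 (measure_ne_top μ _) c
        | succ n ih =>
          have hsum := indicatorConstLp_disjoint_union (p := p) (hacc n) (hf (n + 1))
            (measure_ne_top μ _) (measure_ne_top μ _)
            (Set.disjoint_accumulate hdisj n.lt_succ_self) c
          convert V.add_mem ih (h (n + 1) (measure_ne_top μ _) c) using 1
          rw [← hsum]
          congr 1; simp
      exact hV.mem_of_tendsto (tendsto_indicatorConstLp_set hp
        (tendsto_measure_symmDiff_accumulate_iUnion hf)) (Eventually.of_forall hmem_acc)
  refine eq_top_iff.2 fun f _ => Lp.induction hp (· ∈ V) (fun c s hs hμs => hind s hs hμs.ne c)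
    (fun _ _ _ _ _ => V.add_mem) hV f

end MeasureTheory

section Invariant

variable {Ω : Type*} [m : MeasurableSpace Ω] {T : Ω → Ω}

theorem invSigma_le (T : Ω → Ω) : invSigma T ≤ m := fun _ hA => hA.1

theorem comp_iterate_eq_of_measurable_invSigma {β : Type*} [MeasurableSpace β]
    [MeasurableSingletonClass β] {g : Ω → β} (hg : Measurable[invSigma T] g) (n : ℕ) :
    g ∘ T^[n] = g := by
  have hsemiconj : Function.Semiconj g T id := fun x =>
    ((hg (measurableSet_singleton (g x))).2.symm ▸ rfl : x ∈ T ⁻¹' (g ⁻¹' {g x}))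
  ext x
  simpa using hsemiconj.iterate_right n x

end Invariant

section Koopman

variable {Ω 𝕜 E : Type*} [MeasurableSpace Ω] [NormedRing 𝕜] [NormedAddCommGroup E] [Module 𝕜 E]
  [IsBoundedSMul 𝕜 E] {μ : Measure Ω} {T : Ω → Ω} (hT : MeasurePreserving T μ μ)

variable (𝕜) in
def koopman : Lp E 2 μ →ₗᵢ[𝕜] Lp E 2 μ := Lp.compMeasurePreservingₗᵢ 𝕜 T hT

theorem koopman_pow_ae_eq (n : ℕ) {a : Lp E 2 μ} {F : Ω → E} (ha : a =ᵐ[μ] F) :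
    (koopman 𝕜 hT ^ n) a =ᵐ[μ] F ∘ T^[n] := by
  have hpow : ⇑(koopman 𝕜 hT ^ n) = Lp.compMeasurePreserving (E := E) (p := 2) T^[n]
      (hT.iterate n) := by
    rw [LinearIsometry.coe_pow, ← Lp.compMeasurePreserving_iterate]
    rfl
  rw [hpow]
  exact (Lp.coeFn_compMeasurePreserving a _).trans
    ((hT.iterate n).quasiMeasurePreserving.ae_eq_comp ha)

end Koopman

section CondExpInv

variable {Ω 𝕜 E : Type*} [MeasurableSpace Ω] [RCLike 𝕜] [NormedAddCommGroup E]
  [InnerProductSpace 𝕜 E] [CompleteSpace E] {μ : Measure Ω} {T : Ω → Ω}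

variable (𝕜 μ T) in
def condExpInvL2 : Lp E 2 μ →L[𝕜] Lp E 2 μ :=
  (lpMeas E 𝕜 (invSigma T) 2 μ).subtypeL ∘L condExpL2 E 𝕜 (invSigma_le T)

theorem koopman_pow_condExpInvL2 (hT : MeasurePreserving T μ μ) (n : ℕ) (a : Lp E 2 μ) :
    (koopman 𝕜 hT ^ n) (condExpInvL2 𝕜 μ T a) = condExpInvL2 𝕜 μ T a := by
  borelize E
  have hmeas := aestronglyMeasurable_condExpL2 (𝕜 := 𝕜) (invSigma_le T) a
  refine Lp.ext ((koopman_pow_ae_eq hT n hmeas.ae_eq_mk).trans ?_)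
  rw [comp_iterate_eq_of_measurable_invSigma hmeas.stronglyMeasurable_mk.measurable]
  exact hmeas.ae_eq_mk.symm

theorem condExpInvL2_indicatorConstLp {s : Set Ω} (hs : MeasurableSet[invSigma T] s)
    (hμs : μ s ≠ ∞) (c : E) :
    condExpInvL2 𝕜 μ T (indicatorConstLp 2 (invSigma_le T s hs) hμs c) =
      indicatorConstLp 2 (invSigma_le T s hs) hμs c :=
  condExpL2_indicator_of_measurable (invSigma_le T) hs hμs c

theorem inner_condExpInvL2_self_right (a : Lp E 2 μ) :
    ⟪a, condExpInvL2 𝕜 μ T a⟫_𝕜 = ⟪condExpInvL2 𝕜 μ T a, condExpInvL2 𝕜 μ T a⟫_𝕜 :=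
  (inner_condExpL2_eq_inner_fun (invSigma_le T) a _
    (aestronglyMeasurable_condExpL2 (invSigma_le T) a)).symm

theorem inner_condExpInvL2_self_left (a : Lp E 2 μ) :
    ⟪condExpInvL2 𝕜 μ T a, a⟫_𝕜 = ⟪condExpInvL2 𝕜 μ T a, condExpInvL2 𝕜 μ T a⟫_𝕜 := by
  rw [← inner_conj_symm, inner_condExpInvL2_self_right, inner_conj_symm]

theorem inner_sub_condExpInvL2_koopman_pow (hT : MeasurePreserving T μ μ) (n : ℕ)
    (a : Lp E 2 μ) :
    ⟪a - condExpInvL2 𝕜 μ T a, (koopman 𝕜 hT ^ n) (a - condExpInvL2 𝕜 μ T a)⟫_𝕜 =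
      ⟪a, (koopman 𝕜 hT ^ n) a⟫_𝕜 - ⟪condExpInvL2 𝕜 μ T a, condExpInvL2 𝕜 μ T a⟫_𝕜 := by
  have hinv := koopman_pow_condExpInvL2 (𝕜 := 𝕜) hT n a
  have hcross : ⟪condExpInvL2 𝕜 μ T a, (koopman 𝕜 hT ^ n) a⟫_𝕜 =
      ⟪condExpInvL2 𝕜 μ T a, condExpInvL2 𝕜 μ T a⟫_𝕜 := by
    rw [← hinv, LinearIsometry.inner_map_map, hinv, inner_condExpInvL2_self_left]
  rw [map_sub, hinv, inner_sub_left, inner_sub_right, inner_sub_right, hcross,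
    inner_condExpInvL2_self_right]
  ring

end CondExpInv

section ScalarValued

variable {Ω 𝕜 : Type*} [MeasurableSpace Ω] [RCLike 𝕜] {μ : Measure Ω} {T : Ω → Ω}

theorem condExpInvL2_ae_eq_condExp [IsFiniteMeasure μ] {a : Lp 𝕜 2 μ} {F : Ω → 𝕜}
    (ha : a =ᵐ[μ] F) : condExpInvL2 𝕜 μ T a =ᵐ[μ] μ[F | invSigma T] := by
  have h := (Lp.memLp a).condExpL2_ae_eq_condExp (𝕜 := 𝕜) (invSigma_le T)
  rw [Lp.toLp_coeFn] at h
  exact h.trans (condExp_congr_ae ha)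

theorem integral_conj_mul_eq_inner {a b : Lp 𝕜 2 μ} {F G : Ω → 𝕜} (ha : a =ᵐ[μ] F)
    (hb : b =ᵐ[μ] G) : ∫ x, conj (F x) * G x ∂μ = ⟪a, b⟫_𝕜 := by
  rw [L2.inner_def]
  refine integral_congr_ae ?_
  filter_upwards [ha, hb] with x hax hbx
  rw [RCLike.inner_apply, hax, hbx, mul_comm]

end ScalarValued

section WeakConvergence

variable {Ω 𝕜 E : Type*} [MeasurableSpace Ω] [RCLike 𝕜] [NormedAddCommGroup E]
  [InnerProductSpace 𝕜 E] [CompleteSpace E] {μ : Measure Ω} {T : Ω → Ω}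
  (hT : MeasurePreserving T μ μ)

variable (𝕜) in
def weakConvToCondExpInv : Submodule 𝕜 (Lp E 2 μ) where
  carrier := {a | ∀ b, Tendsto (fun n => ⟪b, (koopman 𝕜 hT ^ n) a⟫_𝕜) atTop
    (𝓝 ⟪b, condExpInvL2 𝕜 μ T a⟫_𝕜)}
  add_mem' ha hb b := by simpa [inner_add_right] using (ha b).add (hb b)
  zero_mem' b := by simp
  smul_mem' c a ha b := by simpa [inner_smul_right] using (ha b).const_mul c

theorem isClosed_weakConvToCondExpInv :
    IsClosed (weakConvToCondExpInv (E := E) 𝕜 hT : Set (Lp E 2 μ)) := by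
  simp only [weakConvToCondExpInv, Submodule.coe_set_mk, AddSubmonoid.coe_set_mk,
    AddSubsemigroup.coe_set_mk, Set.ofPred_forall]
  refine isClosed_iInter fun b => ?_
  exact (LipschitzWith.uniformEquicontinuous _ _ fun n =>
    (lipschitzWith_inner_right b).comp (koopman 𝕜 hT ^ n).lipschitz).equicontinuous
    |>.isClosed_setOfPred_tendsto (by fun_prop)

theorem mem_weakConvToCondExpInv_of_condExpInvL2_eq {a : Lp E 2 μ}
    (ha : condExpInvL2 𝕜 μ T a = a) : a ∈ weakConvToCondExpInv 𝕜 hT := fun b => by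
  have hfix : ∀ n, (koopman 𝕜 hT ^ n) a = a := fun n => ha ▸ koopman_pow_condExpInvL2 hT n a
  simp only [hfix, ha]
  exact tendsto_const_nhds

theorem mem_weakConvToCondExpInv_of_tendsto {a : Lp E 2 μ}
    (ha : Tendsto (fun n => ⟪a - condExpInvL2 𝕜 μ T a,
      (koopman 𝕜 hT ^ n) (a - condExpInvL2 𝕜 μ T a)⟫_𝕜) atTop (𝓝 0)) :
    a ∈ weakConvToCondExpInv 𝕜 hT := fun b => by
  have h := (tendsto_inner_pow_of_tendsto_inner_self_pow _ ha b).add_const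
    ⟪b, condExpInvL2 𝕜 μ T a⟫_𝕜
  simpa [map_sub, koopman_pow_condExpInvL2, inner_sub_right] using h

end WeakConvergence

theorem expCovInv_eq_inner {Ω : Type*} [MeasurableSpace Ω] {μ : Measure Ω} [IsFiniteMeasure μ]
    {T : Ω → Ω} (hT : MeasurePreserving T μ μ) {a : Lp ℂ 2 μ} {F : Ω → ℂ} (ha : a =ᵐ[μ] F)
    (n : ℕ) :
    expCovInv μ T F F n = ⟪a - condExpInvL2 ℂ μ T a,
      (koopman ℂ hT ^ n) (a - condExpInvL2 ℂ μ T a)⟫_ℂ := by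
  rw [inner_sub_condExpInvL2_koopman_pow hT n a, ← integral_conj_mul_eq_inner ha
    (koopman_pow_ae_eq hT n ha), ← integral_conj_mul_eq_inner (condExpInvL2_ae_eq_condExp ha)
    (condExpInvL2_ae_eq_condExp ha)]
  rfl

theorem weak_L2_convergence_of_piSystem
    {Ω : Type*} [m : MeasurableSpace Ω] (μ : Measure Ω) [IsProbabilityMeasure μ]
    (T : Ω → Ω) (hT : MeasurePreserving T μ μ)
    (S : Set (Set Ω))
    (hSpi : ∀ A ∈ S, ∀ B ∈ S, A ∩ B ∈ S)
    (hSgen : MeasurableSpace.generateFrom S = m)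
    (hS : ∀ A ∈ S,
      Tendsto
        (fun n : ℕ =>
          expCovInv μ T (A.indicator fun _ => (1 : ℂ)) (A.indicator fun _ => (1 : ℂ)) n)
        atTop (𝓝 0)) :
    ∀ f : Ω → ℂ, MemLp f 2 μ →
      ∀ g : Ω → ℂ, MemLp g 2 μ →
        Tendsto (fun n : ℕ => ∫ x, (starRingEnd ℂ) (g x) * f (T^[n] x) ∂μ) atTop
          (𝓝 (∫ x, (starRingEnd ℂ) (g x) * (μ[f | invSigma T]) x ∂μ)) := by
  have htop : weakConvToCondExpInv (E := ℂ) ℂ hT = ⊤ := by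
    refine Submodule.toAddSubgroup_eq_top.1 (Lp.addSubgroup_eq_top_of_isPiSystem
      ENNReal.ofNat_ne_top (isClosed_weakConvToCondExpInv hT) hSgen.symm
      (fun A hA B hB _ => hSpi A hA B hB) (fun c => ?_) (fun A hAS hA c => ?_))
    · exact mem_weakConvToCondExpInv_of_condExpInvL2_eq hT
        (condExpInvL2_indicatorConstLp (@MeasurableSet.univ _ (invSigma T)) _ c)
    · rw [← mul_one c, ← smul_eq_mul, ← smul_indicatorConstLp]
      refine Submodule.smul_mem _ c (mem_weakConvToCondExpInv_of_tendsto hT ?_)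
      exact (hS A hAS).congr fun n => expCovInv_eq_inner hT indicatorConstLp_coeFn n
  intro f hf g hg
  have h := (htop ▸ Submodule.mem_top : hf.toLp f ∈ weakConvToCondExpInv ℂ hT) (hg.toLp g)
  rw [← integral_conj_mul_eq_inner hg.coeFn_toLp (condExpInvL2_ae_eq_condExp hf.coeFn_toLp)]
    at h
  exact h.congr fun n =>
    (integral_conj_mul_eq_inner hg.coeFn_toLp (koopman_pow_ae_eq hT n hf.coeFn_toLp)).symm
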